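/- arXiv:2401.17017 — 5 statements merged into one kernel-verified Lean document; each statement's English description precedes it below -/
import Mathlib

section
/- In the 2-dimensional warped product AdS' = (-π/2, π/2) ×_cos ℝ, two points (t₁,x₁) and (t₂,x₂) are causally related, (t₁,x₁) ≤ (t₂,x₂), if and only if t₁ ≤ t₂ and sin(t₁)sin(t₂) + cos(t₁)cos(t₂)cosh(x₂ - x₁) ≤ 1. -/
noncomputable section
open Real Set Filter

/-- A future-directed causal curve `s ↦ (α s, β s)` on `[a,b]` in the Lorentzian warped
product comparison space `I ×_f ℝ`, i.e. the spacetime `I × ℝ` with the continuous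
metric `-dt² + f(t)² dx²` and time orientation `∂ₜ`. -/
def IsCausalCurve (I : Set ℝ) (f : ℝ → ℝ) (a b : ℝ) (α β : ℝ → ℝ) : Prop :=
  a < b ∧ (∀ s ∈ Set.Icc a b, α s ∈ I) ∧
    (∀ s ∈ Set.Icc a b, DifferentiableAt ℝ α s ∧ DifferentiableAt ℝ β s) ∧
    (∀ s ∈ Set.Icc a b, 0 < deriv α s ∧ (f (α s)) ^ 2 * (deriv β s) ^ 2 ≤ (deriv α s) ^ 2)

/-- A future-directed timelike curve in `I ×_f ℝ`. -/
def IsTimelikeCurve (I : Set ℝ) (f : ℝ → ℝ) (a b : ℝ) (α β : ℝ → ℝ) : Prop :=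
  IsCausalCurve I f a b α β ∧
    ∀ s ∈ Set.Icc a b, (f (α s)) ^ 2 * (deriv β s) ^ 2 < (deriv α s) ^ 2

/-- The causal relation `≤` of `I ×_f ℝ`: there is a future-directed causal curve
from `p` to `q`, or `p = q`. -/
def causalRel (I : Set ℝ) (f : ℝ → ℝ) (p q : ℝ × ℝ) : Prop :=
  p = q ∨ ∃ a b α β, IsCausalCurve I f a b α β ∧
    α a = p.1 ∧ β a = p.2 ∧ α b = q.1 ∧ β b = q.2

/-- The chronological (timelike) relation `≪` of `I ×_f ℝ`. -/
def chronRel (I : Set ℝ) (f : ℝ → ℝ) (p q : ℝ × ℝ) : Prop :=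
  ∃ a b α β, IsTimelikeCurve I f a b α β ∧
    α a = p.1 ∧ β a = p.2 ∧ α b = q.1 ∧ β b = q.2

/-- The Lorentzian length `∫ √(α'² - f(α)² β'²)` of a causal curve in `I ×_f ℝ`. -/
def lorLength (f : ℝ → ℝ) (a b : ℝ) (α β : ℝ → ℝ) : ℝ :=
  ∫ s in a..b, Real.sqrt ((deriv α s) ^ 2 - (f (α s)) ^ 2 * (deriv β s) ^ 2)

/-- The time separation function of `I ×_f ℝ`: the supremum of Lorentzian lengths of
future-directed causal curves from `p` to `q` (and `0` if there are none). -/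
def timeSep (I : Set ℝ) (f : ℝ → ℝ) (p q : ℝ × ℝ) : ℝ :=
  sSup (insert 0 {L | ∃ a b α β, IsCausalCurve I f a b α β ∧
    α a = p.1 ∧ β a = p.2 ∧ α b = q.1 ∧ β b = q.2 ∧ L = lorLength f a b α β})

/-- The underlying interval `(-π/2, π/2)` of `AdS' = (-π/2,π/2) ×_cos ℝ`. -/
def adsStrip : Set ℝ := Set.Ioo (-(π / 2)) (π / 2)

/-!
In the conformal time `λ = gdInv t = arsinh (tan t)` (the inverse Gudermannian `gd⁻¹`) the
metric of AdS' becomes `cos² t (-dλ² + dx²)`, conformal to the Minkowski plane. Along a causal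
curve `λ ± x` is therefore nondecreasing, and conversely any two points with
`|x₂ - x₁| ≤ λ₂ - λ₁` are joined by a straight line in `(λ, x)`. Finally
`cos t₁ cos t₂ cosh (λ₂ - λ₁) = 1 - sin t₁ sin t₂`, so the Minkowski condition
`cosh (x₂ - x₁) ≤ cosh (λ₂ - λ₁)` is the stated inequality.
-/

section WarpedProduct

variable {I : Set ℝ} {f : ℝ → ℝ} {a b : ℝ} {α β : ℝ → ℝ}

theorem IsCausalCurve.strictMonoOn (hC : IsCausalCurve I f a b α β) :
    StrictMonoOn α (Icc a b) := by
  obtain ⟨-, -, hdiff, hcaus⟩ := hC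
  refine strictMonoOn_of_deriv_pos (convex_Icc a b)
    (fun s hs => (hdiff s hs).1.continuousAt.continuousWithinAt) fun s hs => ?_
  exact (hcaus s (interior_subset hs)).1

theorem IsCausalCurve.lt (hC : IsCausalCurve I f a b α β) : α a < α b :=
  hC.strictMonoOn (left_mem_Icc.2 hC.1.le) (right_mem_Icc.2 hC.1.le) hC.1

theorem IsCausalCurve.monotoneOn_add {Λ : ℝ → ℝ} (hf : ∀ t ∈ I, 0 < f t)
    (hΛ : ∀ t ∈ I, HasDerivAt Λ (f t)⁻¹ t) (hC : IsCausalCurve I f a b α β) {ε : ℝ}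
    (hε : |ε| ≤ 1) : MonotoneOn (fun s => Λ (α s) + ε * β s) (Icc a b) := by
  obtain ⟨-, hmem, hdiff, hcaus⟩ := hC
  have hD : ∀ s ∈ Icc a b, HasDerivAt (fun s => Λ (α s) + ε * β s)
      ((f (α s))⁻¹ * deriv α s + ε * deriv β s) s := fun s hs =>
    ((hΛ _ (hmem s hs)).comp s (hdiff s hs).1.hasDerivAt).add
      ((hdiff s hs).2.hasDerivAt.const_mul ε)
  refine monotoneOn_of_hasDerivWithinAt_nonneg (convex_Icc a b)
    (fun s hs => (hD s hs).continuousAt.continuousWithinAt)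
    (fun s hs => (hD s (interior_subset hs)).hasDerivWithinAt) fun s hs => ?_
  replace hs := interior_subset hs
  obtain ⟨hα', hnull⟩ := hcaus s hs
  have hfα := hf _ (hmem s hs)
  have hspeed : |f (α s) * deriv β s| ≤ deriv α s := by
    rw [← abs_of_pos hα']
    exact sq_le_sq.1 (by rwa [mul_pow])
  have hεspeed : |ε * (f (α s) * deriv β s)| ≤ deriv α s := by
    rw [abs_mul]
    exact (mul_le_of_le_one_left (abs_nonneg _) hε).trans hspeed
  have key : 0 ≤ deriv α s + ε * (f (α s) * deriv β s) := by
    linarith [neg_abs_le (ε * (f (α s) * deriv β s))]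
  calc (0 : ℝ) ≤ (f (α s))⁻¹ * (deriv α s + ε * (f (α s) * deriv β s)) :=
        mul_nonneg (inv_nonneg.2 hfα.le) key
    _ = (f (α s))⁻¹ * deriv α s + ε * deriv β s := by field_simp

theorem IsCausalCurve.abs_sub_le {Λ : ℝ → ℝ} (hf : ∀ t ∈ I, 0 < f t)
    (hΛ : ∀ t ∈ I, HasDerivAt Λ (f t)⁻¹ t) (hC : IsCausalCurve I f a b α β) :
    |β b - β a| ≤ Λ (α b) - Λ (α a) := by
  have ha : a ∈ Icc a b := left_mem_Icc.2 hC.1.le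
  have hb : b ∈ Icc a b := right_mem_Icc.2 hC.1.le
  have hplus := hC.monotoneOn_add hf hΛ (ε := 1) (by simp) ha hb hC.1.le
  have hminus := hC.monotoneOn_add hf hΛ (ε := -1) (by simp) ha hb hC.1.le
  simp only at hplus hminus
  rw [abs_le]
  constructor <;> linarith

/-- A straight line of slope `k` in the conformal coordinates `(g⁻¹ t, x)`. -/
theorem isCausalCurve_of_hasDerivAt {g : ℝ → ℝ} (hab : a < b) (hgI : ∀ s ∈ Icc a b, g s ∈ I)
    (hg : ∀ s ∈ Icc a b, HasDerivAt g (f (g s)) s) (hf : ∀ s ∈ Icc a b, 0 < f (g s))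
    (x : ℝ) {k : ℝ} (hk : |k| ≤ 1) :
    IsCausalCurve I f a b g (fun s => x + k * (s - a)) := by
  have hline : ∀ s, HasDerivAt (fun s => x + k * (s - a)) k s := fun s => by
    simpa using (((hasDerivAt_id s).sub_const a).const_mul k).const_add x
  refine ⟨hab, hgI, fun s hs => ⟨(hg s hs).differentiableAt, (hline s).differentiableAt⟩,
    fun s hs => ?_⟩
  rw [(hg s hs).deriv, (hline s).deriv]
  have hk2 : k ^ 2 ≤ 1 := by rwa [← sq_abs, sq_le_one_iff_abs_le_one, abs_abs]
  exact ⟨hf s hs, mul_le_of_le_one_right (sq_nonneg _) hk2⟩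

theorem causalRel_iff_of_conformalTime {g Λ : ℝ → ℝ} (hgI : ∀ s, g s ∈ I)
    (hg : ∀ s, HasDerivAt g (f (g s)) s) (hf : ∀ s, 0 < f (g s))
    (hgΛ : ∀ t ∈ I, g (Λ t) = t) (hΛ : ∀ t ∈ I, HasDerivAt Λ (f t)⁻¹ t)
    {t₁ x₁ t₂ x₂ : ℝ} (h₁ : t₁ ∈ I) (h₂ : t₂ ∈ I) :
    causalRel I f (t₁, x₁) (t₂, x₂) ↔ t₁ ≤ t₂ ∧ |x₂ - x₁| ≤ Λ t₂ - Λ t₁ := by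
  have hfI : ∀ t ∈ I, 0 < f t := fun t ht => hgΛ t ht ▸ hf (Λ t)
  constructor
  · rintro (heq | ⟨a, b, α, β, hC, rfl, rfl, rfl, rfl⟩)
    · obtain ⟨rfl, rfl⟩ := Prod.mk.inj heq
      simp
    · exact ⟨hC.lt.le, hC.abs_sub_le hfI hΛ⟩
  · rintro ⟨hle, hx⟩
    obtain rfl | hlt := hle.eq_or_lt
    · left
      rw [sub_self, abs_nonpos_iff, sub_eq_zero] at hx
      rw [hx]
    · right
      have hΛlt : Λ t₁ < Λ t₂ := (strictMono_of_hasDerivAt_pos hg hf).lt_iff_lt.1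
        (by rwa [hgΛ t₁ h₁, hgΛ t₂ h₂])
      have hk : |(x₂ - x₁) / (Λ t₂ - Λ t₁)| ≤ 1 := by
        rw [abs_div, abs_of_pos (sub_pos.2 hΛlt)]
        exact div_le_one_of_le₀ hx (sub_pos.2 hΛlt).le
      refine ⟨Λ t₁, Λ t₂, g, _, isCausalCurve_of_hasDerivAt hΛlt (fun s _ => hgI s)
        (fun s _ => hg s) (fun s _ => hf s) x₁ hk, hgΛ t₁ h₁, by simp, hgΛ t₂ h₂, ?_⟩
      field_simp [(sub_pos.2 hΛlt).ne']
      ring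

end WarpedProduct

section AntiDeSitter

def gd (s : ℝ) : ℝ := arctan (sinh s)

def gdInv (t : ℝ) : ℝ := arsinh (tan t)

theorem gd_mem_adsStrip (s : ℝ) : gd s ∈ adsStrip :=
  ⟨neg_pi_div_two_lt_arctan _, arctan_lt_pi_div_two _⟩

theorem cos_gd (s : ℝ) : cos (gd s) = (cosh s)⁻¹ := by
  rw [gd, cos_arctan, ← cosh_sq', sqrt_sq (cosh_pos s).le, one_div]

theorem hasDerivAt_gd (s : ℝ) : HasDerivAt gd (cos (gd s)) s := by
  refine ((hasDerivAt_arctan _).comp s (hasDerivAt_sinh s)).congr_deriv ?_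
  rw [cos_gd, ← cosh_sq']
  field_simp [(cosh_pos s).ne']

theorem gd_gdInv {t : ℝ} (ht : t ∈ adsStrip) : gd (gdInv t) = t := by
  rw [gd, gdInv, sinh_arsinh, arctan_tan ht.1 ht.2]

theorem sqrt_one_add_tan_sq {t : ℝ} (hc : 0 < cos t) : √(1 + tan t ^ 2) = (cos t)⁻¹ := by
  rw [← sqrt_sq (inv_pos.2 hc).le, inv_pow, ← inv_one_add_tan_sq hc.ne', inv_inv]

theorem cosh_gdInv {t : ℝ} (hc : 0 < cos t) : cosh (gdInv t) = (cos t)⁻¹ := by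
  rw [gdInv, cosh_arsinh, sqrt_one_add_tan_sq hc]

theorem hasDerivAt_gdInv {t : ℝ} (hc : 0 < cos t) : HasDerivAt gdInv (cos t)⁻¹ t := by
  refine ((hasDerivAt_arsinh _).comp t (hasDerivAt_tan hc.ne')).congr_deriv ?_
  rw [sqrt_one_add_tan_sq hc]
  field_simp

theorem monotoneOn_gdInv : MonotoneOn gdInv adsStrip :=
  fun _ h₁ _ h₂ hle => arsinh_le_arsinh.2 (strictMonoOn_tan.monotoneOn h₁ h₂ hle)

theorem cos_mul_cos_mul_cosh_gdInv_sub {t₁ t₂ : ℝ} (hc₁ : 0 < cos t₁) (hc₂ : 0 < cos t₂) :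
    cos t₁ * cos t₂ * cosh (gdInv t₂ - gdInv t₁) = 1 - sin t₁ * sin t₂ := by
  rw [cosh_sub, cosh_gdInv hc₁, cosh_gdInv hc₂, gdInv, gdInv, sinh_arsinh, sinh_arsinh,
    tan_eq_sin_div_cos, tan_eq_sin_div_cos]
  field_simp [hc₁.ne', hc₂.ne']

/-- In `AdS' = (-π/2, π/2) ×_cos ℝ`, two points `(t₁,x₁)` and `(t₂,x₂)` are causally
related iff `t₁ ≤ t₂` and `sin t₁ sin t₂ + cos t₁ cos t₂ cosh (x₂ - x₁) ≤ 1`. -/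
theorem adsPrime_causal_iff (t₁ x₁ t₂ x₂ : ℝ) (h₁ : t₁ ∈ adsStrip) (h₂ : t₂ ∈ adsStrip) :
    causalRel adsStrip Real.cos (t₁, x₁) (t₂, x₂) ↔
      t₁ ≤ t₂ ∧
        Real.sin t₁ * Real.sin t₂ + Real.cos t₁ * Real.cos t₂ * Real.cosh (x₂ - x₁) ≤ 1 := by
  rw [causalRel_iff_of_conformalTime gd_mem_adsStrip hasDerivAt_gd
    (fun s => cos_pos_of_mem_Ioo (gd_mem_adsStrip s)) (fun _ => gd_gdInv)
    (fun _ ht => hasDerivAt_gdInv (cos_pos_of_mem_Ioo ht)) h₁ h₂]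
  refine and_congr_right fun hle => ?_
  have hc₁ := cos_pos_of_mem_Ioo h₁
  have hc₂ := cos_pos_of_mem_Ioo h₂
  have hΛ : 0 ≤ gdInv t₂ - gdInv t₁ := sub_nonneg.2 (monotoneOn_gdInv h₁ h₂ hle)
  rw [← abs_of_nonneg hΛ, ← cosh_le_cosh, ← mul_le_mul_iff_right₀ (mul_pos hc₁ hc₂),
    cos_mul_cos_mul_cosh_gdInv_sub hc₁ hc₂]
  constructor <;> intro h <;> linarith

end AntiDeSitter
end
end

section
/- Let f : I → (0,∞) be continuous on an open interval I ⊆ ℝ. Then the Lorentzian warped product comparison space I ×_f ℝ is globally hyperbolic: every causal diamond J(p,q) = J⁺(p) ∩ J⁻(q) is compact, and the space is non-totally imprisoning. -/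
noncomputable section
open Real Set Filter

/-- The causal diamond `J(p,q) = J⁺(p) ∩ J⁻(q)` in `I ×_f ℝ`. -/
def cmpDiamond (I : Set ℝ) (f : ℝ → ℝ) (p q : ℝ × ℝ) : Set (ℝ × ℝ) :=
  {r | r.1 ∈ I ∧ causalRel I f p r ∧ causalRel I f r q}

/-!
Let `F` be a primitive of `1 / f`. In the coordinates `(F t, x)` the metric is conformal to the
two-dimensional Minkowski metric, so a causal curve satisfies `|dx| ≤ dF`, and conversely the
straight segments of slope at most `1` in these coordinates are causal. Hence `p ≤ r` exactly when
`p.1 ≤ r.1` and `|r.2 - p.2| ≤ F r.1 - F p.1`, which exhibits each causal diamond as a closed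
subset of a box. On a compact set `1 / f ≤ L`, so a causal curve there has `|dx| ≤ L dt`, and its
length is at most `max 1 L` times the extent of its time coordinate.
-/

theorem abs_sub_le_sub_of_abs_hasDerivAt_le {g h g' h' : ℝ → ℝ} {a b : ℝ} (hab : a ≤ b)
    (hg : ∀ s ∈ Icc a b, HasDerivAt g (g' s) s) (hh : ∀ s ∈ Icc a b, HasDerivAt h (h' s) s)
    (hle : ∀ s ∈ Icc a b, |g' s| ≤ h' s) : |g b - g a| ≤ h b - h a := by
  have hg' : ∀ s ∈ Icc a b, HasDerivAt (fun u => g u - g a) (g' s) s :=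
    fun s hs => (hg s hs).sub_const _
  have hh' : ∀ s ∈ Icc a b, HasDerivAt (fun u => h u - h a) (h' s) s :=
    fun s hs => (hh s hs).sub_const _
  refine image_norm_le_of_norm_deriv_right_le_deriv_boundary' (f := fun u => g u - g a)
    (fun s hs => (hg' s hs).continuousAt.continuousWithinAt)
    (fun s hs => (hg' s (Ico_subset_Icc_self hs)).hasDerivWithinAt) (by simp)
    (fun s hs => (hh' s hs).continuousAt.continuousWithinAt)
    (fun s hs => (hh' s (Ico_subset_Icc_self hs)).hasDerivWithinAt)
    (fun s hs => hle s (Ico_subset_Icc_self hs)) (right_mem_Icc.2 hab)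

theorem ContinuousOn.exists_hasDerivAt {I : Set ℝ} (hIo : IsOpen I) (hIc : I.OrdConnected)
    {g : ℝ → ℝ} (hg : ContinuousOn g I) {x₀ : ℝ} (hx₀ : x₀ ∈ I) :
    ∃ G : ℝ → ℝ, ∀ t ∈ I, HasDerivAt G (g t) t :=
  ⟨fun t => ∫ u in x₀..t, g u, fun t ht =>
    intervalIntegral.integral_hasDerivAt_right
      ((hg.mono (hIc.uIcc_subset hx₀ ht)).intervalIntegrable)
      (hg.stronglyMeasurableAtFilter hIo t ht) (hg.continuousAt (hIo.mem_nhds ht))⟩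

theorem eVariationOn_le_mul_of_dist_le {E : Type*} [PseudoMetricSpace E] {φ : ℝ → E}
    {ψ : ℝ → ℝ} {s : Set ℝ} {L : ℝ}
    (h : ∀ x ∈ s, ∀ y ∈ s, dist (φ x) (φ y) ≤ L * dist (ψ x) (ψ y)) :
    eVariationOn φ s ≤ ENNReal.ofReal L * eVariationOn ψ s := by
  refine iSup_le fun ⟨n, u, hu, us⟩ => ?_
  calc ∑ i ∈ Finset.range n, edist (φ (u (i + 1))) (φ (u i))
      ≤ ∑ i ∈ Finset.range n, ENNReal.ofReal L * edist (ψ (u (i + 1))) (ψ (u i)) := by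
        refine Finset.sum_le_sum fun i _ => ?_
        rw [edist_dist, edist_dist, ← ENNReal.ofReal_mul' dist_nonneg]
        exact ENNReal.ofReal_le_ofReal (h _ (us _) _ (us _))
    _ = ENNReal.ofReal L * ∑ i ∈ Finset.range n, edist (ψ (u (i + 1))) (ψ (u i)) :=
        (Finset.mul_sum _ _ _).symm
    _ ≤ ENNReal.ofReal L * eVariationOn ψ s := by grw [eVariationOn.sum_le hu us]

namespace IsCausalCurve

variable {I : Set ℝ} {f : ℝ → ℝ} {a b : ℝ} {α β : ℝ → ℝ}

theorem strictMonoOn_fst (h : IsCausalCurve I f a b α β) : StrictMonoOn α (Icc a b) :=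
  strictMonoOn_of_deriv_pos (convex_Icc a b)
    (fun s hs => (h.2.2.1 s hs).1.continuousAt.continuousWithinAt)
    (fun s hs => (h.2.2.2 s (interior_subset hs)).1)

theorem abs_deriv_snd_le (hfpos : ∀ t ∈ I, 0 < f t) (h : IsCausalCurve I f a b α β)
    {s : ℝ} (hs : s ∈ Icc a b) : |deriv β s| ≤ (f (α s))⁻¹ * deriv α s := by
  have hf : 0 < f (α s) := hfpos _ (h.2.1 s hs)
  obtain ⟨hα, hcone⟩ := h.2.2.2 s hs
  rw [inv_mul_eq_div, le_div_iff₀ hf]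
  refine abs_le_of_sq_le_sq' ?_ hα.le |>.2
  nlinarith [sq_abs (deriv β s)]

theorem abs_sub_snd_le (hfpos : ∀ t ∈ I, 0 < f t) (h : IsCausalCurve I f a b α β)
    {G g : ℝ → ℝ} (hG : ∀ s ∈ Icc a b, HasDerivAt G (g (α s)) (α s))
    (hg : ∀ s ∈ Icc a b, (f (α s))⁻¹ ≤ g (α s)) {x y : ℝ} (hx : x ∈ Icc a b) (hy : y ∈ Icc a b)
    (hxy : x ≤ y) : |β y - β x| ≤ G (α y) - G (α x) := by
  have hsub : Icc x y ⊆ Icc a b := Icc_subset_Icc hx.1 hy.2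
  refine abs_sub_le_sub_of_abs_hasDerivAt_le hxy
    (fun s hs => (h.2.2.1 s (hsub hs)).2.hasDerivAt)
    (fun s hs => (hG s (hsub hs)).comp s (h.2.2.1 s (hsub hs)).1.hasDerivAt) fun s hs => ?_
  calc |deriv β s| ≤ (f (α s))⁻¹ * deriv α s := h.abs_deriv_snd_le hfpos (hsub hs)
    _ ≤ g (α s) * deriv α s :=
        mul_le_mul_of_nonneg_right (hg s (hsub hs)) (h.2.2.2 s (hsub hs)).1.le

theorem dist_le_mul_dist_fst (hfpos : ∀ t ∈ I, 0 < f t) (h : IsCausalCurve I f a b α β)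
    {L : ℝ} (hL : ∀ s ∈ Icc a b, (f (α s))⁻¹ ≤ L) {x y : ℝ} (hx : x ∈ Icc a b)
    (hy : y ∈ Icc a b) : dist ((α x, β x) : ℝ × ℝ) (α y, β y) ≤ max 1 L * dist (α x) (α y) := by
  wlog hxy : x ≤ y generalizing x y
  · rw [dist_comm, dist_comm (α x)]
    exact this hy hx (le_of_not_ge hxy)
  have hα : 0 ≤ α y - α x := sub_nonneg.2 (h.strictMonoOn_fst.monotoneOn hx hy hxy)
  have hβ : |β y - β x| ≤ L * (α y - α x) := by
    simpa [mul_sub] using h.abs_sub_snd_le hfpos (G := (L * ·)) (g := fun _ => L)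
      (fun s _ => by simpa using (hasDerivAt_id (α s)).const_mul L) hL hx hy hxy
  simp only [Prod.dist_eq, Real.dist_eq]
  rw [abs_sub_comm (α x), abs_sub_comm (β x), abs_of_nonneg hα]
  exact max_le (le_mul_of_one_le_left hα (le_max_left _ _))
    (hβ.trans (mul_le_mul_of_nonneg_right (le_max_right _ _) hα))

theorem eVariationOn_le (hfpos : ∀ t ∈ I, 0 < f t) (h : IsCausalCurve I f a b α β) {L : ℝ}
    (hL : ∀ s ∈ Icc a b, (f (α s))⁻¹ ≤ L) :
    eVariationOn (fun s => ((α s, β s) : ℝ × ℝ)) (Icc a b) ≤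
      ENNReal.ofReal (max 1 L * (α b - α a)) := by
  have hα : eVariationOn α (Icc a b) = ENNReal.ofReal (α b - α a) := by
    simpa using h.strictMonoOn_fst.monotoneOn.eVariationOn_eq (left_mem_Icc.2 h.1.le)
      (right_mem_Icc.2 h.1.le)
  calc eVariationOn (fun s => ((α s, β s) : ℝ × ℝ)) (Icc a b)
      ≤ ENNReal.ofReal (max 1 L) * eVariationOn α (Icc a b) :=
        eVariationOn_le_mul_of_dist_le fun x hx y hy => h.dist_le_mul_dist_fst hfpos hL hx hy
    _ = ENNReal.ofReal (max 1 L * (α b - α a)) := by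
        rw [hα, ← ENNReal.ofReal_mul (by positivity)]

end IsCausalCurve

section CausalStructure

variable {I : Set ℝ} {f F : ℝ → ℝ}

theorem causalRel_of_fst_lt (hIc : I.OrdConnected) (hfpos : ∀ t ∈ I, 0 < f t)
    (hF : ∀ t ∈ I, HasDerivAt F (f t)⁻¹ t) {p r : ℝ × ℝ} (hp : p.1 ∈ I) (hr : r.1 ∈ I)
    (hlt : p.1 < r.1) (hcone : |r.2 - p.2| ≤ F r.1 - F p.1) : causalRel I f p r := by
  have hsub : Icc p.1 r.1 ⊆ I := hIc.out hp hr
  have hΔ : 0 ≤ F r.1 - F p.1 := (abs_nonneg _).trans hcone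
  set c := (r.2 - p.2) / (F r.1 - F p.1)
  have hc : |c| ≤ 1 := by
    rw [abs_div, abs_of_nonneg hΔ]
    exact div_le_one_of_le₀ hcone hΔ
  have hβ : ∀ s ∈ Icc p.1 r.1,
      HasDerivAt (fun t => p.2 + c * (F t - F p.1)) (c * (f s)⁻¹) s :=
    fun s hs => (((hF s (hsub hs)).sub_const _).const_mul c).const_add _
  -- a straight segment in the coordinates `(F t, x)`, where light cones have slope `± 1`
  refine Or.inr ⟨p.1, r.1, id, fun t => p.2 + c * (F t - F p.1),
    ⟨hlt, hsub, fun s hs => ⟨differentiableAt_id, (hβ s hs).differentiableAt⟩, fun s hs => ?_⟩,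
    rfl, by simp, rfl, ?_⟩
  · have hfs : f s ≠ 0 := (hfpos s (hsub hs)).ne'
    rw [deriv_id, (hβ s hs).deriv, id]
    refine ⟨one_pos, ?_⟩
    have : f s ^ 2 * (c * (f s)⁻¹) ^ 2 = c ^ 2 := by field_simp
    rw [this, one_pow]
    exact (sq_le_one_iff_abs_le_one c).2 hc
  · have : c * (F r.1 - F p.1) = r.2 - p.2 :=
      div_mul_cancel_of_imp fun h0 => abs_nonpos_iff.1 (h0 ▸ hcone)
    simp only [this, add_sub_cancel]

theorem causalRel_iff (hIc : I.OrdConnected) (hfpos : ∀ t ∈ I, 0 < f t)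
    (hF : ∀ t ∈ I, HasDerivAt F (f t)⁻¹ t) {p r : ℝ × ℝ} (hp : p.1 ∈ I) (hr : r.1 ∈ I) :
    causalRel I f p r ↔ p.1 ≤ r.1 ∧ |r.2 - p.2| ≤ F r.1 - F p.1 := by
  constructor
  · rintro (rfl | ⟨a, b, α, β, hc, hαa, hβa, hαb, hβb⟩)
    · simp
    rw [← hαa, ← hβa, ← hαb, ← hβb]
    have ha : a ∈ Icc a b := left_mem_Icc.2 hc.1.le
    have hb : b ∈ Icc a b := right_mem_Icc.2 hc.1.le
    exact ⟨(hc.strictMonoOn_fst ha hb hc.1).le, hc.abs_sub_snd_le hfpos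
      (g := fun t => (f t)⁻¹) (fun s hs => hF _ (hc.2.1 s hs)) (fun _ _ => le_rfl) ha hb hc.1.le⟩
  · rintro ⟨hle, hcone⟩
    rcases hle.eq_or_lt with heq | hlt
    · rw [heq, sub_self, abs_nonpos_iff, sub_eq_zero] at hcone
      exact Or.inl (Prod.ext heq hcone.symm)
    · exact causalRel_of_fst_lt hIc hfpos hF hp hr hlt hcone

theorem cmpDiamond_eq (hIc : I.OrdConnected) (hfpos : ∀ t ∈ I, 0 < f t)
    (hF : ∀ t ∈ I, HasDerivAt F (f t)⁻¹ t) {p q : ℝ × ℝ} (hp : p.1 ∈ I) (hq : q.1 ∈ I) :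
    cmpDiamond I f p q = {r | r.1 ∈ Icc p.1 q.1 ∧
      |r.2 - p.2| ≤ F r.1 - F p.1 ∧ |q.2 - r.2| ≤ F q.1 - F r.1} := by
  ext r
  constructor
  · rintro ⟨hr, hpr, hrq⟩
    rw [causalRel_iff hIc hfpos hF hp hr] at hpr
    rw [causalRel_iff hIc hfpos hF hr hq] at hrq
    exact ⟨⟨hpr.1, hrq.1⟩, hpr.2, hrq.2⟩
  · rintro ⟨hrI, hpr, hrq⟩
    have hr : r.1 ∈ I := hIc.out hp hq hrI
    exact ⟨hr, (causalRel_iff hIc hfpos hF hp hr).2 ⟨hrI.1, hpr⟩,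
      (causalRel_iff hIc hfpos hF hr hq).2 ⟨hrI.2, hrq⟩⟩

theorem isCompact_setOf_abs_sub_le {p q : ℝ × ℝ} (hF : ContinuousOn F (Icc p.1 q.1)) :
    IsCompact {r : ℝ × ℝ | r.1 ∈ Icc p.1 q.1 ∧
      |r.2 - p.2| ≤ F r.1 - F p.1 ∧ |q.2 - r.2| ≤ F q.1 - F r.1} := by
  have hFc : ContinuousOn (fun r : ℝ × ℝ => F r.1) (Prod.fst ⁻¹' Icc p.1 q.1) :=
    hF.comp continuous_fst.continuousOn fun _ h => h
  have hclosed := ((isClosed_Icc.preimage continuous_fst).isClosed_le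
      (f := fun r : ℝ × ℝ => |r.2 - p.2|) (g := fun r => F r.1 - F p.1)
      (Continuous.continuousOn (by fun_prop)) (hFc.sub continuousOn_const)).isClosed_le
    (f := fun r : ℝ × ℝ => |q.2 - r.2|) (g := fun r => F q.1 - F r.1)
    (Continuous.continuousOn (by fun_prop)) (continuousOn_const.sub (hFc.mono fun _ h => h.1))
  refine ((isCompact_Icc (a := p.1) (b := q.1)).prod (isCompact_Icc (a := p.2 - (F q.1 - F p.1))
    (b := p.2 + (F q.1 - F p.1)))).of_isClosed_subset
    (by simpa only [sep_ofPred, mem_preimage, mem_ofPred_eq, and_assoc] using hclosed) ?_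
  rintro r ⟨hr, hpr, hrq⟩
  have hFr : F r.1 ≤ F q.1 := sub_nonneg.1 ((abs_nonneg _).trans hrq)
  obtain ⟨h₁, h₂⟩ := abs_le.1 hpr
  exact ⟨hr, by linarith, by linarith⟩

theorem isCompact_cmpDiamond (hIo : IsOpen I) (hIc : I.OrdConnected) (hf : ContinuousOn f I)
    (hfpos : ∀ t ∈ I, 0 < f t) {p q : ℝ × ℝ} (hp : p.1 ∈ I) (hq : q.1 ∈ I) :
    IsCompact (cmpDiamond I f p q) := by
  obtain ⟨F, hF⟩ : ∃ F : ℝ → ℝ, ∀ t ∈ I, HasDerivAt F (f t)⁻¹ t :=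
    (hf.inv₀ fun t ht => (hfpos t ht).ne').exists_hasDerivAt hIo hIc hp
  rw [cmpDiamond_eq hIc hfpos hF hp hq]
  exact isCompact_setOf_abs_sub_le fun t ht =>
    (hF t (hIc.out hp hq ht)).continuousAt.continuousWithinAt

end CausalStructure

theorem exists_eVariationOn_le_of_isCompact {I : Set ℝ} {f : ℝ → ℝ} (hf : ContinuousOn f I)
    (hfpos : ∀ t ∈ I, 0 < f t) {K : Set (ℝ × ℝ)} (hK : IsCompact K)
    (hKI : K ⊆ I ×ˢ (Set.univ : Set ℝ)) :
    ∃ C : ℝ, ∀ a b α β, IsCausalCurve I f a b α β → (∀ s ∈ Icc a b, (α s, β s) ∈ K) →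
      eVariationOn (fun s => ((α s, β s) : ℝ × ℝ)) (Icc a b) ≤ ENNReal.ofReal C := by
  obtain ⟨L, hL⟩ := hK.exists_bound_of_continuousOn (f := fun r => (f r.1)⁻¹)
    ((hf.inv₀ fun t ht => (hfpos t ht).ne').comp continuous_fst.continuousOn
      fun r hr => (hKI hr).1)
  obtain ⟨R, hR⟩ := hK.exists_bound_of_continuousOn (f := Prod.fst) continuous_fst.continuousOn
  refine ⟨max 1 L * (2 * R), fun a b α β hc hγK => ?_⟩
  have hαR : α b - α a ≤ 2 * R := by
    have ha := abs_le.1 (hR _ (hγK a (left_mem_Icc.2 hc.1.le)))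
    have hb := abs_le.1 (hR _ (hγK b (right_mem_Icc.2 hc.1.le)))
    linarith [ha.1, hb.2]
  refine (hc.eVariationOn_le hfpos fun s hs => (le_abs_self _).trans (hL _ (hγK s hs))).trans ?_
  exact ENNReal.ofReal_le_ofReal (mul_le_mul_of_nonneg_left hαR (by positivity))

/-- The Lorentzian warped product comparison space `I ×_f ℝ` (with `I` an open
interval and `f` continuous positive) is globally hyperbolic: all causal diamonds are
compact, and it is non-totally imprisoning, i.e. for every compact set there is a
uniform bound on the (background) metric lengths of causal curves contained in it. -/
theorem comparisonSpace_globallyHyperbolic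
    (I : Set ℝ) (hIo : IsOpen I) (hIc : I.OrdConnected)
    (f : ℝ → ℝ) (hf : ContinuousOn f I) (hfpos : ∀ t ∈ I, 0 < f t) :
    (∀ p q : ℝ × ℝ, p.1 ∈ I → q.1 ∈ I → IsCompact (cmpDiamond I f p q)) ∧
    (∀ K : Set (ℝ × ℝ), IsCompact K → K ⊆ I ×ˢ (Set.univ : Set ℝ) →
      ∃ C : ℝ, ∀ a b α β, IsCausalCurve I f a b α β →
        (∀ s ∈ Set.Icc a b, (α s, β s) ∈ K) →
        eVariationOn (fun s => ((α s, β s) : ℝ × ℝ)) (Set.Icc a b) ≤ ENNReal.ofReal C) :=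
  ⟨fun _ _ hp hq => isCompact_cmpDiamond hIo hIc hf hfpos hp hq,
    fun _ hK hKI => exists_eVariationOn_le_of_isCompact hf hfpos hK hKI⟩
end
end

section
/- Let I ×_f Y be a Lorentzian warped product with 0 ∈ I and conformal time η(t) = ∫_0^t (1/f(s)) ds. Then for any points p, q in the metric space Y and any s with η⁻¹ defined at s and s + d(p,q), the points (η⁻¹(s), p) and (η⁻¹(s + d(p,q)), q) are null related (causally related with zero time separation). -/
noncomputable section
open Real Set Filter

/-- Causal relation of the Lorentzian warped product `I ×_f Y`:
`(s,x) ≤ (t,y)` iff `(s,0) ≤ (t, d(x,y))` in the comparison space `I ×_f ℝ`. -/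
def wpCausal (I : Set ℝ) (f : ℝ → ℝ) {Y : Type*} [MetricSpace Y] (p q : ℝ × Y) : Prop :=
  causalRel I f (p.1, 0) (q.1, dist p.2 q.2)

/-- Chronological relation of the Lorentzian warped product `I ×_f Y`. -/
def wpChron (I : Set ℝ) (f : ℝ → ℝ) {Y : Type*} [MetricSpace Y] (p q : ℝ × Y) : Prop :=
  chronRel I f (p.1, 0) (q.1, dist p.2 q.2)

/-- Time separation of the Lorentzian warped product `I ×_f Y`:
`τ((s,x),(t,y)) = τ_{I ×_f ℝ}((s,0),(t,d(x,y)))`. -/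
def wpTau (I : Set ℝ) (f : ℝ → ℝ) {Y : Type*} [MetricSpace Y] (p q : ℝ × Y) : ℝ :=
  timeSep I f (p.1, 0) (q.1, dist p.2 q.2)

/-- A future-directed causal curve in the Lorentzian warped product `I ×_f Y`. -/
def IsWpCausalCurve (I : Set ℝ) (f : ℝ → ℝ) {Y : Type*} [MetricSpace Y]
    (γ : ℝ → ℝ × Y) (a b : ℝ) : Prop :=
  a < b ∧ ContinuousOn γ (Set.Icc a b) ∧ (∀ s ∈ Set.Icc a b, (γ s).1 ∈ I) ∧
    ∀ u ∈ Set.Icc a b, ∀ v ∈ Set.Icc a b, u < v → wpCausal I f (γ u) (γ v) ∧ γ u ≠ γ v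

/-!
Let `η` be a conformal time, `η' = 1/f`. Along a causal curve `(α, β)` of `I ×_f ℝ` the
function `η ∘ α - β` is nondecreasing, since `f² β'² ≤ α'²` gives `β' ≤ α'/f`. A causal curve
from `(t₁, 0)` to `(t₂, η t₂ - η t₁)` therefore keeps it constant, which forces `β' = α'/f`
everywhere: the curve is null and has Lorentzian length zero. Conversely `t ↦ (t, η t - η t₁)`
is such a null curve, so the two points are causally related.
-/

lemma hasDerivAt_eq_zero_of_nonneg_of_eq {g g' : ℝ → ℝ} {a b : ℝ} (hab : a < b)
    (hg : ∀ s ∈ Icc a b, HasDerivAt g (g' s) s) (hg' : ∀ s ∈ Icc a b, 0 ≤ g' s)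
    (hgab : g a = g b) : ∀ s ∈ Icc a b, g' s = 0 := by
  have hmono : MonotoneOn g (Icc a b) :=
    monotoneOn_of_hasDerivWithinAt_nonneg (convex_Icc a b)
      (fun s hs => (hg s hs).continuousAt.continuousWithinAt)
      (fun s hs => (hg s (interior_subset hs)).hasDerivWithinAt)
      (fun s hs => hg' s (interior_subset hs))
  have hconst : EqOn g (fun _ => g a) (Icc a b) := fun s hs =>
    le_antisymm (hgab ▸ hmono hs (right_mem_Icc.2 hab.le) hs.2)
      (hmono (left_mem_Icc.2 hab.le) hs hs.1)
  intro s hs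
  exact (uniqueDiffOn_Icc hab s hs).eq_deriv _ (hg s hs).hasDerivWithinAt
    ((hasDerivWithinAt_const s _ (g a)).congr hconst (hconst hs))

namespace IsCausalCurve

variable {I : Set ℝ} {f : ℝ → ℝ} {a b : ℝ} {α β : ℝ → ℝ}

lemma monotoneOn (hγ : IsCausalCurve I f a b α β) : MonotoneOn α (Icc a b) :=
  monotoneOn_of_hasDerivWithinAt_nonneg (convex_Icc a b)
    (fun s hs => (hγ.2.2.1 s hs).1.continuousAt.continuousWithinAt)
    (fun s hs => (hγ.2.2.1 s (interior_subset hs)).1.hasDerivAt.hasDerivWithinAt)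
    (fun s hs => (hγ.2.2.2 s (interior_subset hs)).1.le)

lemma deriv_le_inv_mul_deriv (hγ : IsCausalCurve I f a b α β) (hfpos : ∀ t ∈ I, 0 < f t)
    {s : ℝ} (hs : s ∈ Icc a b) : deriv β s ≤ (f (α s))⁻¹ * deriv α s := by
  obtain ⟨hα', hcausal⟩ := hγ.2.2.2 s hs
  have hf := hfpos _ (hγ.2.1 s hs)
  have : f (α s) * deriv β s ≤ deriv α s :=
    (le_abs_self _).trans (abs_le_of_sq_le_sq' (by rw [sq_abs, mul_pow]; exact hcausal) hα'.le).2
  rwa [le_inv_mul_iff₀ hf]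

theorem lorLength_eq_zero (hγ : IsCausalCurve I f a b α β) (hfpos : ∀ t ∈ I, 0 < f t)
    {η : ℝ → ℝ} (hη : ∀ x ∈ Icc (α a) (α b), HasDerivAt η (f x)⁻¹ x)
    (hηβ : η (α b) - η (α a) = β b - β a) : lorLength f a b α β = 0 := by
  have hab := hγ.1
  have hdiff := hγ.2.2.1
  have hw : ∀ s ∈ Icc a b, HasDerivAt (fun s => η (α s) - β s)
      ((f (α s))⁻¹ * deriv α s - deriv β s) s := fun s hs =>
    ((hη (α s) ⟨hγ.monotoneOn (left_mem_Icc.2 hab.le) hs hs.1,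
        hγ.monotoneOn hs (right_mem_Icc.2 hab.le) hs.2⟩).comp s (hdiff s hs).1.hasDerivAt).sub
      (hdiff s hs).2.hasDerivAt
  have hnull := hasDerivAt_eq_zero_of_nonneg_of_eq hab hw
    (fun s hs => sub_nonneg.2 (hγ.deriv_le_inv_mul_deriv hfpos hs)) (by linarith)
  rw [lorLength, ← intervalIntegral.integral_zero]
  refine intervalIntegral.integral_congr fun s hs => ?_
  rw [uIcc_of_le hab.le] at hs
  have hf := (hfpos _ (hγ.2.1 s hs)).ne'
  rw [← sub_eq_zero.1 (hnull s hs)]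
  field_simp
  simp

end IsCausalCurve

/-- The integrand is `1/f` frozen outside `[t₁, t₂]`, so that this primitive is differentiable
at the endpoints although `f` is only given on `[t₁, t₂]`. -/
def conformalTime (f : ℝ → ℝ) (t₁ t₂ t : ℝ) : ℝ :=
  ∫ l in t₁..t, (f (max t₁ (min l t₂)))⁻¹

section ConformalTime

variable {f : ℝ → ℝ} {t₁ t₂ : ℝ}

lemma max_min_eq_of_mem_Icc {x : ℝ} (hx : x ∈ Icc t₁ t₂) : max t₁ (min x t₂) = x := by
  rw [min_eq_left hx.2, max_eq_right hx.1]

lemma hasDerivAt_conformalTime (hf : ContinuousOn f (Icc t₁ t₂))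
    (hf0 : ∀ x ∈ Icc t₁ t₂, f x ≠ 0) {x : ℝ} (hx : x ∈ Icc t₁ t₂) :
    HasDerivAt (conformalTime f t₁ t₂) (f x)⁻¹ x := by
  have hclamp : ∀ y : ℝ, max t₁ (min y t₂) ∈ Icc t₁ t₂ := fun y =>
    ⟨le_max_left _ _, max_le (hx.1.trans hx.2) (min_le_right _ _)⟩
  have hcont : Continuous fun l => (f (max t₁ (min l t₂)))⁻¹ :=
    (hf.comp_continuous (continuous_const.max (continuous_id.min continuous_const)) hclamp).inv₀
      fun y => hf0 _ (hclamp y)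
  have := (hcont.integral_hasStrictDerivAt t₁ x).hasDerivAt
  rwa [max_min_eq_of_mem_Icc hx] at this

@[simp]
lemma conformalTime_left : conformalTime f t₁ t₂ t₁ = 0 :=
  intervalIntegral.integral_same

lemma conformalTime_right (h : t₁ ≤ t₂) :
    conformalTime f t₁ t₂ t₂ = ∫ l in t₁..t₂, 1 / f l := by
  refine intervalIntegral.integral_congr fun l hl => ?_
  rw [uIcc_of_le h] at hl
  simp only [max_min_eq_of_mem_Icc hl, one_div]

end ConformalTime

section ComparisonSpace

variable {I : Set ℝ} {f : ℝ → ℝ}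

lemma isCausalCurve_conformalTime {t₁ t₂ : ℝ} (h : t₁ < t₂) (hI : Icc t₁ t₂ ⊆ I)
    (hf : ContinuousOn f (Icc t₁ t₂)) (hfpos : ∀ x ∈ Icc t₁ t₂, 0 < f x) :
    IsCausalCurve I f t₁ t₂ id (conformalTime f t₁ t₂) := by
  refine ⟨h, hI, fun x hx => ⟨differentiableAt_id,
    (hasDerivAt_conformalTime hf (fun y hy => (hfpos y hy).ne') hx).differentiableAt⟩,
    fun x hx => ⟨by simp, le_of_eq ?_⟩⟩
  rw [(hasDerivAt_conformalTime hf (fun y hy => (hfpos y hy).ne') hx).deriv, deriv_id, id_eq]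
  have := (hfpos x hx).ne'
  field_simp

lemma causalRel_integral_one_div {t₁ t₂ : ℝ} (h : t₁ ≤ t₂) (hI : Icc t₁ t₂ ⊆ I)
    (hf : ContinuousOn f (Icc t₁ t₂)) (hfpos : ∀ x ∈ Icc t₁ t₂, 0 < f x) :
    causalRel I f (t₁, 0) (t₂, ∫ l in t₁..t₂, 1 / f l) := by
  rcases h.eq_or_lt with rfl | hlt
  · exact Or.inl (by simp)
  · exact Or.inr ⟨t₁, t₂, id, conformalTime f t₁ t₂, isCausalCurve_conformalTime hlt hI hf hfpos,
      rfl, conformalTime_left, rfl, conformalTime_right h⟩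

theorem timeSep_integral_one_div_eq_zero (hI : I.OrdConnected) (hf : ContinuousOn f I)
    (hfpos : ∀ t ∈ I, 0 < f t) (t₁ t₂ : ℝ) :
    timeSep I f (t₁, 0) (t₂, ∫ l in t₁..t₂, 1 / f l) = 0 := by
  refine IsGreatest.csSup_eq ⟨mem_insert 0 _, ?_⟩
  rintro L (rfl | ⟨a, b, α, β, hγ, rfl, hβa, rfl, hβb, rfl⟩)
  · exact le_rfl
  have hαab : α a ≤ α b :=
    hγ.monotoneOn (left_mem_Icc.2 hγ.1.le) (right_mem_Icc.2 hγ.1.le) hγ.1.le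
  have hsub : Icc (α a) (α b) ⊆ I :=
    hI.out (hγ.2.1 a (left_mem_Icc.2 hγ.1.le)) (hγ.2.1 b (right_mem_Icc.2 hγ.1.le))
  refine (hγ.lorLength_eq_zero hfpos
    (fun x hx => hasDerivAt_conformalTime (hf.mono hsub) (fun y hy => (hfpos y (hsub hy)).ne') hx)
    ?_).le
  simp only at hβa hβb
  rw [hβa, hβb, conformalTime_left, conformalTime_right hαab]

end ComparisonSpace

/-- Conformal time: if `η(t) = ∫_0^t 1/f` and `η(t₁) = s`, `η(t₂) = s + d(p,q)`, then
`(t₁, p)` and `(t₂, q)` are null related in `I ×_f Y`: causally related with zero time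
separation. -/
theorem wp_conformalTime_null
    (I : Set ℝ) (hIc : I.OrdConnected) (h0 : (0 : ℝ) ∈ I)
    (f : ℝ → ℝ) (hf : ContinuousOn f I) (hfpos : ∀ t ∈ I, 0 < f t)
    {Y : Type*} [MetricSpace Y] (p q : Y) (s t₁ t₂ : ℝ)
    (h₁ : t₁ ∈ I) (h₂ : t₂ ∈ I)
    (hη₁ : (∫ l in (0 : ℝ)..t₁, 1 / f l) = s)
    (hη₂ : (∫ l in (0 : ℝ)..t₂, 1 / f l) = s + dist p q) :
    wpCausal I f (t₁, p) (t₂, q) ∧ wpTau I f (t₁, p) (t₂, q) = 0 := by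
  have hint : ∀ {c₁ c₂}, c₁ ∈ I → c₂ ∈ I →
      IntervalIntegrable (fun l => 1 / f l) MeasureTheory.volume c₁ c₂ :=
    fun hc₁ hc₂ => ContinuousOn.intervalIntegrable <| continuousOn_const.div
      (hf.mono (hIc.uIcc_subset hc₁ hc₂)) fun x hx => (hfpos x (hIc.uIcc_subset hc₁ hc₂ hx)).ne'
  have hD : ∫ l in t₁..t₂, 1 / f l = dist p q := by
    have := intervalIntegral.integral_add_adjacent_intervals (hint h0 h₁) (hint h₁ h₂)
    linarith
  have h12 : t₁ ≤ t₂ := by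
    by_contra! hlt
    have hpos := intervalIntegral.intervalIntegral_pos_of_pos_on (hint h₂ h₁)
      (fun x hx => one_div_pos.2 (hfpos x (hIc.out h₂ h₁ (Ioo_subset_Icc_self hx)))) hlt
    rw [intervalIntegral.integral_symm, hD] at hpos
    linarith [dist_nonneg (x := p) (y := q)]
  have hsub : Icc t₁ t₂ ⊆ I := hIc.out h₁ h₂
  constructor
  · rw [wpCausal, ← hD]
    exact causalRel_integral_one_div h12 hsub (hf.mono hsub) fun x hx => hfpos x (hsub hx)
  · rw [wpTau, ← hD]
    exact timeSep_integral_one_div_eq_zero hIc hf hfpos t₁ t₂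
end
end

section
/- The map f : (-π/2, π/2) × ℝ → {p ∈ ℝ^{1,2} : b(p,p) = -1} given by f(t,x) = (sin t, cos t cosh x, cos t sinh x) is an isometric embedding of the Lorentzian warped product ((-π/2,π/2) ×_cos ℝ, -dt² + cos(t)² dx²) into anti-deSitter space, the quadric {b(p,p) = -1} in the semi-Riemannian space ℝ^{1,2} of signature (-,-,+) with the induced metric. -/
noncomputable section
open Real Set

/-- The bilinear form of signature `(-,-,+)` on `ℝ^{1,2} = ℝ × ℝ × ℝ`. -/
def bForm (p q : ℝ × ℝ × ℝ) : ℝ :=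
  -(p.1 * q.1) - p.2.1 * q.2.1 + p.2.2 * q.2.2

/-- The embedding of `(-π/2,π/2) ×_cos ℝ` into the anti-deSitter quadric. -/
def adsEmb (p : ℝ × ℝ) : ℝ × ℝ × ℝ :=
  (Real.sin p.1, Real.cos p.1 * Real.cosh p.2, Real.cos p.1 * Real.sinh p.2)

/-! All three identities reduce to `sin² t + cos² t = 1` and `cosh² x - sinh² x = 1`.
Injectivity: `sin` is injective on `(-π/2, π/2)`, and there `cos t > 0` can be cancelled from
`cos t sinh x`, leaving the injective `sinh`. -/

theorem bForm_adsEmb_self (p : ℝ × ℝ) : bForm (adsEmb p) (adsEmb p) = -1 := by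
  simp only [bForm, adsEmb]
  linear_combination (-1 : ℝ) * sin_sq_add_cos_sq p.1 - cos p.1 ^ 2 * cosh_sq p.2

theorem adsEmb_injOn : InjOn adsEmb (Ioo (-(π / 2)) (π / 2) ×ˢ (univ : Set ℝ)) := by
  rintro ⟨t₁, x₁⟩ ⟨ht₁, -⟩ ⟨t₂, x₂⟩ ⟨ht₂, -⟩ h
  simp only [adsEmb, Prod.mk.injEq] at h
  obtain ⟨hsin, -, hsinh⟩ := h
  obtain rfl : t₁ = t₂ := injOn_sin (Ioo_subset_Icc_self ht₁) (Ioo_subset_Icc_self ht₂) hsin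
  have hcos : cos t₁ ≠ 0 := (cos_pos_of_mem_Ioo ht₁).ne'
  rw [Prod.mk.injEq, sinh_injective.eq_iff.mp (mul_left_cancel₀ hcos hsinh)]
  exact ⟨rfl, rfl⟩

def adsEmbDeriv (p : ℝ × ℝ) : ℝ × ℝ →L[ℝ] ℝ × ℝ × ℝ :=
  (ContinuousLinearMap.fst ℝ ℝ ℝ).smulRight (cos p.1, -sin p.1 * cosh p.2, -sin p.1 * sinh p.2) +
    (ContinuousLinearMap.snd ℝ ℝ ℝ).smulRight (0, cos p.1 * sinh p.2, cos p.1 * cosh p.2)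

theorem hasFDerivAt_adsEmb (p : ℝ × ℝ) : HasFDerivAt adsEmb (adsEmbDeriv p) p := by
  have hfst : HasFDerivAt Prod.fst (ContinuousLinearMap.fst ℝ ℝ ℝ) p := hasFDerivAt_fst
  have hsnd : HasFDerivAt Prod.snd (ContinuousLinearMap.snd ℝ ℝ ℝ) p := hasFDerivAt_snd
  have hcos := hfst.cos
  refine (hfst.sin.prodMk ((hcos.mul hsnd.cosh).prodMk (hcos.mul hsnd.sinh))).congr_fderiv ?_
  ext <;> simp [adsEmbDeriv] <;> ring

theorem adsEmbDeriv_one_zero (p : ℝ × ℝ) :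
    adsEmbDeriv p (1, 0) = (cos p.1, -sin p.1 * cosh p.2, -sin p.1 * sinh p.2) := by
  simp [adsEmbDeriv]

theorem adsEmbDeriv_zero_one (p : ℝ × ℝ) :
    adsEmbDeriv p (0, 1) = (0, cos p.1 * sinh p.2, cos p.1 * cosh p.2) := by
  simp [adsEmbDeriv]

theorem bForm_adsEmbDeriv_one_zero_self (p : ℝ × ℝ) :
    bForm (adsEmbDeriv p (1, 0)) (adsEmbDeriv p (1, 0)) = -1 := by
  rw [adsEmbDeriv_one_zero, bForm]
  linear_combination (-1 : ℝ) * sin_sq_add_cos_sq p.1 - sin p.1 ^ 2 * cosh_sq p.2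

theorem bForm_adsEmbDeriv_one_zero_zero_one (p : ℝ × ℝ) :
    bForm (adsEmbDeriv p (1, 0)) (adsEmbDeriv p (0, 1)) = 0 := by
  rw [adsEmbDeriv_one_zero, adsEmbDeriv_zero_one, bForm]
  ring

theorem bForm_adsEmbDeriv_zero_one_self (p : ℝ × ℝ) :
    bForm (adsEmbDeriv p (0, 1)) (adsEmbDeriv p (0, 1)) = cos p.1 ^ 2 := by
  rw [adsEmbDeriv_zero_one, bForm]
  linear_combination cos p.1 ^ 2 * cosh_sq p.2

/-- `f(t,x) = (sin t, cos t cosh x, cos t sinh x)` is an isometric embedding of the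
Lorentzian warped product `((-π/2,π/2) ×_cos ℝ, -dt² + cos(t)² dx²)` into the quadric
`{b(p,p) = -1} ⊆ ℝ^{1,2}`: it is injective, takes values in the quadric, and the
pullback of the induced metric is `-dt² + cos(t)² dx²`, i.e. for the differential `L` of
`f` one has `b(L(1,0), L(1,0)) = -1`, `b(L(1,0), L(0,1)) = 0` and
`b(L(0,1), L(0,1)) = cos(t)²`. -/
theorem adsEmb_isometric_embedding :
    Set.InjOn adsEmb (Set.Ioo (-(π / 2)) (π / 2) ×ˢ (Set.univ : Set ℝ)) ∧
    (∀ p : ℝ × ℝ, p.1 ∈ Set.Ioo (-(π / 2)) (π / 2) →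
      bForm (adsEmb p) (adsEmb p) = -1) ∧
    (∀ p : ℝ × ℝ, p.1 ∈ Set.Ioo (-(π / 2)) (π / 2) →
      ∃ L : ℝ × ℝ →L[ℝ] ℝ × ℝ × ℝ, HasFDerivAt adsEmb L p ∧
        bForm (L (1, 0)) (L (1, 0)) = -1 ∧
        bForm (L (1, 0)) (L (0, 1)) = 0 ∧
        bForm (L (0, 1)) (L (0, 1)) = Real.cos p.1 ^ 2) :=
  ⟨adsEmb_injOn, fun p _ => bForm_adsEmb_self p, fun p _ =>
    ⟨adsEmbDeriv p, hasFDerivAt_adsEmb p, bForm_adsEmbDeriv_one_zero_self p,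
      bForm_adsEmbDeriv_one_zero_zero_one p, bForm_adsEmbDeriv_zero_one_self p⟩⟩
end
end

section
/- In 2-dimensional anti-deSitter space, the hyperbolic law of cosines holds: for a timelike triangle with vertices x₁, x₂, x₃, side lengths a_{ij} = max(τ(x_i,x_j), τ(x_j,x_i)), hyperbolic angle ω at x₂, and sign σ = 1 if x₂ is not a time endpoint (σ = -1 if it is), one has cos(a₁₃) = cos(a₁₂)cos(a₂₃) - σ sin(a₁₂) sin(a₂₃) cosh(ω). In particular, fixing all but one side length, ω is a strictly increasing function of the longest side a₁₃ and strictly decreasing in each of the other side lengths. -/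
noncomputable section
open Real Set
open scoped Classical

/-- The inverse hyperbolic cosine. -/
def arcosh (x : ℝ) : ℝ := Real.log (x + Real.sqrt (x ^ 2 - 1))

/-- A tangent vector `u` at a point `p` of the quadric `{b = -1}` is future directed
(with respect to the chosen time orientation, rotation in the first two coordinates). -/
def IsFuture (p u : ℝ × ℝ × ℝ) : Prop :=
  0 < u.1 * p.2.1 - u.2.1 * p.1

/-- The function solving the (`σ = 1`) law of cosines for the hyperbolic angle:
`ω = arcosh ((cos a cos b - cos c)/(sin a sin b))`. -/
def locAngle (a b c : ℝ) : ℝ :=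
  _root_.arcosh ((Real.cos a * Real.cos b - Real.cos c) / (Real.sin a * Real.sin b))

/-!
Expanding `b` along the two geodesics from `x₂` gives
`cos a₁₃ = -b(x₁, x₃) = cos a₁₂ cos a₂₃ - sin a₁₂ sin a₂₃ b(u, v)`. The tangent plane `x₂^⊥` is
Lorentzian, so the reverse Cauchy–Schwarz inequality gives `|b(u, v)| ≥ 1`, with `b(u, v) ≤ -1`
exactly when `u` and `v` have the same time orientation; hence `b(u, v) = σ cosh ω`.

For the monotonicity, `cosh ω = (cos a cos b - cos c) / (sin a sin b)` is increasing in `c` because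
`cos` is, and its derivative in `a` is `(cos a cos c - cos b) / (sin² a sin b) < 0`, since
`cos b ≥ cos (c - a) > cos a cos c` when `a + b ≤ c < π`.
-/

lemma arcosh_eq_real_arcosh : _root_.arcosh = Real.arcosh := rfl

lemma bForm_neg_right (p q : ℝ × ℝ × ℝ) : bForm p (-q) = -bForm p q := by
  simp only [bForm, Prod.fst_neg, Prod.snd_neg]; ring

lemma bForm_neg_left (p q : ℝ × ℝ × ℝ) : bForm (-p) q = -bForm p q := by
  simp only [bForm, Prod.fst_neg, Prod.snd_neg]; ring

/-- A timelike vector tangent to the quadric at `p`; it time-orients the plane `p^⊥`. -/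
def timeDir (p : ℝ × ℝ × ℝ) : ℝ × ℝ × ℝ := (-p.2.1, p.1, 0)

lemma isFuture_iff_pos_bForm_timeDir (p u : ℝ × ℝ × ℝ) :
    IsFuture p u ↔ 0 < bForm (timeDir p) u := by
  simp only [IsFuture, bForm, timeDir]; ring_nf

section TangentPlane

variable {p u v : ℝ × ℝ × ℝ}

lemma bForm_timeDir_self_neg (hp : bForm p p = -1) : bForm (timeDir p) (timeDir p) < 0 := by
  obtain ⟨p₁, p₂, p₃⟩ := p
  simp only [bForm, timeDir] at *
  nlinarith [sq_nonneg p₃]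

lemma timeDir_gram_minor (hp : bForm p p = -1) (hpu : bForm p u = 0) (hpv : bForm p v = 0) :
    bForm (timeDir p) u * bForm (timeDir p) v - bForm (timeDir p) (timeDir p) * bForm u v =
      u.2.2 * v.2.2 := by
  obtain ⟨p₁, p₂, p₃⟩ := p
  obtain ⟨u₁, u₂, u₃⟩ := u
  obtain ⟨v₁, v₂, v₃⟩ := v
  simp only [bForm, timeDir] at *
  linear_combination (p₁ * v₁ + p₂ * v₂) * hpu + p₃ * u₃ * hpv - u₃ * v₃ * hp

/-- `(A B)² - (k + X Y)² = k (X - Y)²`, so `k + X Y ≤ A B` once `A B > 0`. -/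
lemma le_neg_one_of_gram_minors {k A B X Y C : ℝ} (hk : 0 < k) (hA : A ^ 2 = k + X ^ 2)
    (hB : B ^ 2 = k + Y ^ 2) (hC : A * B + k * C = X * Y) (hAB : 0 < A * B) : C ≤ -1 := by
  have hsq : (A * B) ^ 2 - (k + X * Y) ^ 2 = k * (X - Y) ^ 2 := by
    linear_combination (k + Y ^ 2) * hA + (A ^ 2) * hB
  have hle : k + X * Y ≤ A * B :=
    abs_le_of_sq_le_sq' (by nlinarith [mul_nonneg hk.le (sq_nonneg (X - Y))]) hAB.le |>.2
  exact le_of_mul_le_mul_left (by linarith) hk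

lemma sq_bForm_timeDir (hp : bForm p p = -1) (hu : bForm u u = -1) (hpu : bForm p u = 0) :
    bForm (timeDir p) u ^ 2 = -bForm (timeDir p) (timeDir p) + u.2.2 ^ 2 := by
  linear_combination timeDir_gram_minor hp hpu hpu + bForm (timeDir p) (timeDir p) * hu

lemma bForm_timeDir_ne_zero (hp : bForm p p = -1) (hu : bForm u u = -1) (hpu : bForm p u = 0) :
    bForm (timeDir p) u ≠ 0 := by
  intro h
  nlinarith [sq_bForm_timeDir hp hu hpu, bForm_timeDir_self_neg hp, sq_nonneg u.2.2]

lemma bForm_le_neg_one_of_isFuture_iff (hp : bForm p p = -1) (hu : bForm u u = -1)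
    (hv : bForm v v = -1) (hpu : bForm p u = 0) (hpv : bForm p v = 0)
    (h : IsFuture p u ↔ IsFuture p v) : bForm u v ≤ -1 := by
  rw [isFuture_iff_pos_bForm_timeDir, isFuture_iff_pos_bForm_timeDir] at h
  refine le_neg_one_of_gram_minors (neg_pos.2 (bForm_timeDir_self_neg hp))
    (sq_bForm_timeDir hp hu hpu) (sq_bForm_timeDir hp hv hpv)
    (by linear_combination timeDir_gram_minor hp hpu hpv) ?_
  rcases (bForm_timeDir_ne_zero hp hu hpu).lt_or_gt with hneg | hpos
  · exact mul_pos_of_neg_of_neg hneg <| (not_lt.1 (h.not.1 hneg.not_gt)).lt_of_ne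
      (bForm_timeDir_ne_zero hp hv hpv)
  · exact mul_pos hpos (h.1 hpos)

lemma isFuture_neg_iff (hp : bForm p p = -1) (hu : bForm u u = -1) (hpu : bForm p u = 0) :
    IsFuture p (-u) ↔ ¬IsFuture p u := by
  rw [isFuture_iff_pos_bForm_timeDir, isFuture_iff_pos_bForm_timeDir, bForm_neg_right, neg_pos,
    not_lt]
  exact ⟨le_of_lt, fun h => h.lt_of_ne (bForm_timeDir_ne_zero hp hu hpu)⟩

lemma one_le_bForm_of_not_isFuture_iff (hp : bForm p p = -1) (hu : bForm u u = -1)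
    (hv : bForm v v = -1) (hpu : bForm p u = 0) (hpv : bForm p v = 0)
    (h : ¬(IsFuture p u ↔ IsFuture p v)) : 1 ≤ bForm u v := by
  have hneg := bForm_le_neg_one_of_isFuture_iff (v := -v) hp hu
    (by rwa [bForm_neg_left, bForm_neg_right, neg_neg]) hpu (by rw [bForm_neg_right, hpv, neg_zero])
    (by rw [isFuture_neg_iff hp hv hpv]; tauto)
  rw [bForm_neg_right] at hneg
  linarith

lemma sign_mul_cosh_arcosh_abs_bForm (hp : bForm p p = -1) (hu : bForm u u = -1)
    (hv : bForm v v = -1) (hpu : bForm p u = 0) (hpv : bForm p v = 0) :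
    (if (IsFuture p u ↔ IsFuture p v) then -1 else 1) * cosh (_root_.arcosh |bForm u v|) =
      bForm u v := by
  rw [arcosh_eq_real_arcosh]
  split_ifs with h
  · have hle := bForm_le_neg_one_of_isFuture_iff hp hu hv hpu hpv h
    rw [abs_of_neg (by linarith), Real.cosh_arcosh (by linarith)]
    ring
  · have hge := one_le_bForm_of_not_isFuture_iff hp hu hv hpu hpv h
    rw [abs_of_pos (by linarith), Real.cosh_arcosh hge]
    ring

lemma bForm_geodesics (hp : bForm p p = -1) (hpu : bForm p u = 0) (hpv : bForm p v = 0)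
    (a b : ℝ) :
    bForm (cos a • p + sin a • u) (cos b • p + sin b • v) =
      -(cos a * cos b) + sin a * sin b * bForm u v := by
  obtain ⟨p₁, p₂, p₃⟩ := p
  obtain ⟨u₁, u₂, u₃⟩ := u
  obtain ⟨v₁, v₂, v₃⟩ := v
  simp only [bForm, Prod.smul_mk, Prod.mk_add_mk, smul_eq_mul] at *
  linear_combination cos a * cos b * hp + cos a * sin b * hpv + sin a * cos b * hpu

end TangentPlane

def coshAngle (a b c : ℝ) : ℝ := (cos a * cos b - cos c) / (sin a * sin b)

lemma locAngle_eq_arcosh_coshAngle (a b c : ℝ) : locAngle a b c = Real.arcosh (coshAngle a b c) :=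
  rfl

lemma coshAngle_comm (a b c : ℝ) : coshAngle a b c = coshAngle b a c := by
  rw [coshAngle, coshAngle, mul_comm (cos a), mul_comm (sin a)]

lemma one_le_coshAngle {a b c : ℝ} (ha : 0 < a) (hb : 0 < b) (hc : a + b ≤ c) (hcπ : c < π) :
    1 ≤ coshAngle a b c := by
  have hsin : 0 < sin a * sin b :=
    mul_pos (sin_pos_of_pos_of_lt_pi ha (by linarith)) (sin_pos_of_pos_of_lt_pi hb (by linarith))
  have hcos : cos c ≤ cos (a + b) :=
    cos_le_cos_of_nonneg_of_le_pi (by linarith) hcπ.le hc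
  rw [coshAngle, one_le_div hsin]
  linarith [cos_add a b]

lemma strictMonoOn_coshAngle_right {a b : ℝ} (hab : 0 < sin a * sin b) :
    StrictMonoOn (coshAngle a b) (Icc 0 π) := fun _ hx _ hy hxy =>
  div_lt_div_of_pos_right (by linarith [strictAntiOn_cos hx hy hxy]) hab

lemma hasDerivAt_cos_mul_sub_div_sin (β γ : ℝ) {a : ℝ} (ha : sin a ≠ 0) :
    HasDerivAt (fun x => (cos x * β - γ) / sin x) ((γ * cos a - β) / sin a ^ 2) a := by
  refine ((((hasDerivAt_cos a).mul_const β).sub_const γ).div (hasDerivAt_sin a) ha).congr_deriv ?_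
  linear_combination (-β / sin a ^ 2) * sin_sq_add_cos_sq a

lemma cos_mul_cos_lt_cos {a b c : ℝ} (ha : 0 < a) (hb : 0 ≤ b) (hc : a + b ≤ c) (hcπ : c < π) :
    cos a * cos c < cos b := by
  have hsin : 0 < sin c * sin a :=
    mul_pos (sin_pos_of_pos_of_lt_pi (by linarith) hcπ) (sin_pos_of_pos_of_lt_pi ha (by linarith))
  calc cos a * cos c < cos (c - a) := by rw [cos_sub]; linarith
    _ ≤ cos b := cos_le_cos_of_nonneg_of_le_pi hb (by linarith) (by linarith)

lemma strictAntiOn_coshAngle_left {b c : ℝ} (hb : 0 < b) (hc : c < π) :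
    StrictAntiOn (fun a => coshAngle a b c) (Ioc 0 (c - b)) := by
  have hsin : ∀ a ∈ Ioc 0 (c - b), sin a ≠ 0 := fun a ha =>
    (sin_pos_of_pos_of_lt_pi ha.1 (by linarith [ha.2])).ne'
  have hderiv := fun a ha => hasDerivAt_cos_mul_sub_div_sin (cos b) (cos c) (hsin a ha)
  have hanti : StrictAntiOn (fun a => (cos a * cos b - cos c) / sin a) (Ioc 0 (c - b)) := by
    refine strictAntiOn_of_deriv_neg (convex_Ioc _ _)
      (fun a ha => (hderiv a ha).continuousAt.continuousWithinAt) fun a ha => ?_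
    rw [interior_Ioc] at ha
    rw [(hderiv a (Ioo_subset_Ioc_self ha)).deriv]
    refine div_neg_of_neg_of_pos ?_ (pow_pos ?_ 2)
    · linarith [cos_mul_cos_lt_cos ha.1 hb.le (by linarith [ha.2]) hc]
    · exact sin_pos_of_pos_of_lt_pi ha.1 (by linarith [ha.2])
  intro a₁ ha₁ a₂ ha₂ h
  simp only [coshAngle, ← div_div]
  exact div_lt_div_of_pos_right (hanti ha₁ ha₂ h)
    (sin_pos_of_pos_of_lt_pi hb (by linarith [ha₁.1, ha₁.2]))

lemma strictMonoOn_locAngle_right {a b : ℝ} (ha : 0 < a) (hb : 0 < b) (hab : a + b < π) :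
    StrictMonoOn (fun c => locAngle a b c) (Ico (a + b) π) :=
  Real.strictMonoOn_arcosh.comp
    ((strictMonoOn_coshAngle_right (mul_pos (sin_pos_of_pos_of_lt_pi ha (by linarith))
      (sin_pos_of_pos_of_lt_pi hb (by linarith)))).mono
      (Ico_subset_Icc_self.trans (Icc_subset_Icc_left (by linarith))))
    fun _ hc => zero_lt_one.trans_le (one_le_coshAngle ha hb hc.1 hc.2)

lemma strictAntiOn_locAngle_left {b c : ℝ} (hb : 0 < b) (hc : c < π) :
    StrictAntiOn (fun a => locAngle a b c) (Ioc 0 (c - b)) :=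
  Real.strictMonoOn_arcosh.comp_strictAntiOn (strictAntiOn_coshAngle_left hb hc)
    fun _ ha => zero_lt_one.trans_le (one_le_coshAngle ha.1 hb (by linarith [ha.2]) hc)

/-- The hyperbolic law of cosines in 2-dimensional anti-deSitter space, modelled on the
quadric `{b(p,p) = -1} ⊆ ℝ^{1,2}`.  The vertices are `x₁, x₂, x₃`, the sides from `x₂`
are the geodesics `λ ↦ cos λ • x₂ + sin λ • u` resp. `v` with unit timelike tangents
`u, v ⊥ x₂`, the side lengths are `a₁₂, a₂₃` and `a₁₃ = arccos (-b(x₁,x₃))`, the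
hyperbolic angle at `x₂` is `ω = arcosh |b(u,v)|`, and `σ = -1` iff `x₂` is a time
endpoint (i.e. `u` and `v` point in the same time direction). -/
theorem ads_law_of_cosines :
    (∀ (x₁ x₂ x₃ u v : ℝ × ℝ × ℝ) (a₁₂ a₂₃ a₁₃ ω σ : ℝ),
      bForm x₂ x₂ = -1 → bForm u u = -1 → bForm v v = -1 →
      bForm x₂ u = 0 → bForm x₂ v = 0 →
      a₁₂ ∈ Set.Ioo 0 π → a₂₃ ∈ Set.Ioo 0 π →
      x₁ = Real.cos a₁₂ • x₂ + Real.sin a₁₂ • u →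
      x₃ = Real.cos a₂₃ • x₂ + Real.sin a₂₃ • v →
      -bForm x₁ x₃ ∈ Set.Ioc (-1 : ℝ) 1 →
      a₁₃ = Real.arccos (-bForm x₁ x₃) →
      ω = _root_.arcosh |bForm u v| →
      σ = (if (IsFuture x₂ u ↔ IsFuture x₂ v) then -1 else 1) →
      Real.cos a₁₃ =
        Real.cos a₁₂ * Real.cos a₂₃ - σ * Real.sin a₁₂ * Real.sin a₂₃ * Real.cosh ω) ∧
    (∀ a b : ℝ, 0 < a → 0 < b → a + b < π →
      StrictMonoOn (fun c => locAngle a b c) (Set.Ico (a + b) π)) ∧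
    (∀ b c : ℝ, 0 < b → c < π → StrictAntiOn (fun a => locAngle a b c) (Set.Ioc 0 (c - b))) ∧
    (∀ a c : ℝ, 0 < a → c < π → StrictAntiOn (fun b => locAngle a b c) (Set.Ioc 0 (c - a))) := by
  refine ⟨?_, fun a b => strictMonoOn_locAngle_right, fun b c => strictAntiOn_locAngle_left,
    fun a c ha hc => ?_⟩
  · intro x₁ x₂ x₃ u v a₁₂ a₂₃ a₁₃ ω σ hp hu hv hpu hpv _ _ hx₁ hx₃ hmem ha₁₃ hω hσ
    subst hx₁ hx₃ ha₁₃ hω hσ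
    rw [cos_arccos hmem.1.le hmem.2, bForm_geodesics hp hpu hpv]
    linear_combination sin a₁₂ * sin a₂₃ * sign_mul_cosh_arcosh_abs_bForm hp hu hv hpu hpv
  · simpa only [locAngle_eq_arcosh_coshAngle, coshAngle_comm a] using
      strictAntiOn_locAngle_left ha hc
end
end
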